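/- Along any solution x(t) of dx/dt = F(x) with all coordinates positive, d/dt L(x(t)) = ∑_{i=1}^3 x_i(t) · (F_i(x(t))/x_i(t))^2 ≥ 0, with equality at time t if and only if F(x(t)) = 0. -/

import Mathlib

noncomputable def symF (a β : ℝ) (i : Fin 3) (x₁ x₂ x₃ : ℝ) : ℝ :=
  let S := x₁ ^ β + x₂ ^ β + x₃ ^ β
  match i with
  | 0 => (x₁ ^ β + a * (x₂ ^ β + x₃ ^ β)) / ((1 + 2 * a) * S) - x₁
  | 1 => (x₂ ^ β + a * (x₁ ^ β + x₃ ^ β)) / ((1 + 2 * a) * S) - x₂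
  | 2 => (x₃ ^ β + a * (x₁ ^ β + x₂ ^ β)) / ((1 + 2 * a) * S) - x₃

noncomputable def L (a β x₁ x₂ x₃ : ℝ) : ℝ :=
  -(x₁ + x₂ + x₃) + (1 / (2 * a + 1)) *
    (a * Real.log (x₁ * x₂ * x₃) - ((a - 1) / β) * Real.log (x₁ ^ β + x₂ ^ β + x₃ ^ β))

/-!
`L` is a Lyapunov function whose gradient is the vector field rescaled by the coordinates:
`∂L/∂xᵢ = Fᵢ / xᵢ`. By the chain rule, along the flow `dL/dt = ∑ (Fᵢ / xᵢ) Fᵢ = ∑ xᵢ (Fᵢ / xᵢ)²`,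
a sum of squares with positive weights, which vanishes exactly when every `Fᵢ` does.
-/

lemma coord_div_self_eq {a β y P S : ℝ} (ha : 2 * a + 1 ≠ 0) (hy : y ≠ 0) (hS : S ≠ 0)
    (hPS : y ^ β + P = S) :
    ((y ^ β + a * P) / ((1 + 2 * a) * S) - y) / y =
      -1 + (a / y - (a - 1) * y ^ β / (y * S)) / (2 * a + 1) := by
  subst hPS
  have : 1 + 2 * a ≠ 0 := by rwa [add_comm]
  field_simp
  ring

/-- `∂L/∂xᵢ` at a point with `xᵢ = y` and `x₁ ^ β + x₂ ^ β + x₃ ^ β = S`. -/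
noncomputable def partialL (a β y S : ℝ) : ℝ :=
  -1 + (a / y - (a - 1) * y ^ β / (y * S)) / (2 * a + 1)

lemma symF_div_self_eq_partialL {a β x₁ x₂ x₃ : ℝ} (ha : 2 * a + 1 ≠ 0)
    (h₁ : 0 < x₁) (h₂ : 0 < x₂) (h₃ : 0 < x₃) (i : Fin 3) :
    symF a β i x₁ x₂ x₃ / ![x₁, x₂, x₃] i =
      partialL a β (![x₁, x₂, x₃] i) (x₁ ^ β + x₂ ^ β + x₃ ^ β) := by
  have hS : x₁ ^ β + x₂ ^ β + x₃ ^ β ≠ 0 := by positivity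
  fin_cases i <;>
    refine coord_div_self_eq ha (by simp [h₁.ne', h₂.ne', h₃.ne']) hS ?_ <;> ring

lemma hasDerivAt_L_comp {a β : ℝ} (ha : 2 * a + 1 ≠ 0) (hβ : β ≠ 0) {x₁ x₂ x₃ : ℝ → ℝ}
    {v₁ v₂ v₃ t : ℝ} (h₁ : 0 < x₁ t) (h₂ : 0 < x₂ t) (h₃ : 0 < x₃ t)
    (hd₁ : HasDerivAt x₁ v₁ t) (hd₂ : HasDerivAt x₂ v₂ t) (hd₃ : HasDerivAt x₃ v₃ t) :
    HasDerivAt (fun s => L a β (x₁ s) (x₂ s) (x₃ s))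
      (symF a β 0 (x₁ t) (x₂ t) (x₃ t) / x₁ t * v₁ +
        symF a β 1 (x₁ t) (x₂ t) (x₃ t) / x₂ t * v₂ +
        symF a β 2 (x₁ t) (x₂ t) (x₃ t) / x₃ t * v₃) t := by
  have hS : 0 < x₁ t ^ β + x₂ t ^ β + x₃ t ^ β := by positivity
  have hpow {x : ℝ → ℝ} {v : ℝ} (hx : 0 < x t) (hd : HasDerivAt x v t) :
      HasDerivAt (fun s => x s ^ β) (v * β * (x t ^ β / x t)) t := by
    simpa only [Real.rpow_sub_one hx.ne'] using hd.rpow_const (Or.inl hx.ne')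
  have hlogS := (((hpow h₁ hd₁).add (hpow h₂ hd₂)).add (hpow h₃ hd₃)).log hS.ne'
  have hlogP := ((hd₁.mul hd₂).mul hd₃).log (mul_pos (mul_pos h₁ h₂) h₃).ne'
  have hL := ((hd₁.add hd₂).add hd₃).neg.add
    (((hlogP.const_mul a).sub (hlogS.const_mul ((a - 1) / β))).const_mul (1 / (2 * a + 1)))
  refine HasDerivAt.congr_deriv (f := fun s => L a β (x₁ s) (x₂ s) (x₃ s)) hL ?_
  have hgrad := symF_div_self_eq_partialL (β := β) ha h₁ h₂ h₃
  have hgrad₁ := hgrad 0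
  have hgrad₂ := hgrad 1
  have hgrad₃ := hgrad 2
  simp only [Matrix.cons_val] at hgrad₁ hgrad₂ hgrad₃
  rw [hgrad₁, hgrad₂, hgrad₃]
  simp only [partialL, Pi.add_apply, Pi.mul_apply]
  field_simp
  ring

lemma weighted_sq_sum_eq_zero_iff {x₁ x₂ x₃ : ℝ} (h₁ : 0 < x₁) (h₂ : 0 < x₂) (h₃ : 0 < x₃)
    (f₁ f₂ f₃ : ℝ) :
    x₁ * (f₁ / x₁) ^ 2 + x₂ * (f₂ / x₂) ^ 2 + x₃ * (f₃ / x₃) ^ 2 = 0 ↔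
      f₁ = 0 ∧ f₂ = 0 ∧ f₃ = 0 := by
  have hterm {x f : ℝ} (hx : 0 < x) : 0 ≤ x * (f / x) ^ 2 ∧ (x * (f / x) ^ 2 = 0 ↔ f = 0) :=
    ⟨by positivity, by simp [hx.ne']⟩
  rw [add_eq_zero_iff_of_nonneg (add_nonneg (hterm h₁).1 (hterm h₂).1) (hterm h₃).1,
    add_eq_zero_iff_of_nonneg (hterm h₁).1 (hterm h₂).1, (hterm h₁).2, (hterm h₂).2, (hterm h₃).2,
    and_assoc]

theorem L_increases_along_flow (a β : ℝ) (ha : 0 < a) (hβ : 0 < β)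
    (x₁ x₂ x₃ : ℝ → ℝ) (t : ℝ)
    (h1 : 0 < x₁ t) (h2 : 0 < x₂ t) (h3 : 0 < x₃ t)
    (hd1 : HasDerivAt x₁ (symF a β 0 (x₁ t) (x₂ t) (x₃ t)) t)
    (hd2 : HasDerivAt x₂ (symF a β 1 (x₁ t) (x₂ t) (x₃ t)) t)
    (hd3 : HasDerivAt x₃ (symF a β 2 (x₁ t) (x₂ t) (x₃ t)) t) :
    HasDerivAt (fun s => L a β (x₁ s) (x₂ s) (x₃ s))
      (x₁ t * (symF a β 0 (x₁ t) (x₂ t) (x₃ t) / x₁ t) ^ 2 +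
       x₂ t * (symF a β 1 (x₁ t) (x₂ t) (x₃ t) / x₂ t) ^ 2 +
       x₃ t * (symF a β 2 (x₁ t) (x₂ t) (x₃ t) / x₃ t) ^ 2) t ∧
    0 ≤ x₁ t * (symF a β 0 (x₁ t) (x₂ t) (x₃ t) / x₁ t) ^ 2 +
       x₂ t * (symF a β 1 (x₁ t) (x₂ t) (x₃ t) / x₂ t) ^ 2 +
       x₃ t * (symF a β 2 (x₁ t) (x₂ t) (x₃ t) / x₃ t) ^ 2 ∧
    (x₁ t * (symF a β 0 (x₁ t) (x₂ t) (x₃ t) / x₁ t) ^ 2 +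
       x₂ t * (symF a β 1 (x₁ t) (x₂ t) (x₃ t) / x₂ t) ^ 2 +
       x₃ t * (symF a β 2 (x₁ t) (x₂ t) (x₃ t) / x₃ t) ^ 2 = 0 ↔
      ∀ i : Fin 3, symF a β i (x₁ t) (x₂ t) (x₃ t) = 0) := by
  refine ⟨?_, by positivity, ?_⟩
  · refine (hasDerivAt_L_comp (by positivity) hβ.ne' h1 h2 h3 hd1 hd2 hd3).congr_deriv ?_
    field_simp
  · rw [weighted_sq_sum_eq_zero_iff h1 h2 h3, Fin.forall_fin_succ, Fin.forall_fin_two]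
    rfl
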